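/- arXiv:1710.07236 — 2 statements merged into one kernel-verified Lean document; each statement's English description precedes it below -/
import Mathlib

section
/- Let A be a real N×N matrix with entries in {-1, 0, 1}, and let A⁺ and A⁻ be as above with A = A⁺ - A⁻. With B_1 = A⁺, U_1 = A⁻, B_l = B_{l-1}A⁺ + U_{l-1}A⁻, and U_l = B_{l-1}A⁻ + U_{l-1}A⁺ for l ≥ 2, the signed Katz relevance matrix with combining function f(B_l, U_l) = B_l - U_l equals the unsigned Katz relevance applied to the signed adjacency matrix: for every real β and every positive integer γ, Σ_{l=1}^{γ} β^l (B_l - U_l) = Σ_{l=1}^{γ} β^l A^l. -/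
lemma eq_ite_one_sub_ite_neg_one {R : Type*} [Ring R] [CharZero R] [DecidableEq R] {a : R}
    (ha : a = -1 ∨ a = 0 ∨ a = 1) :
    a = (if a = 1 then 1 else 0) - (if a = -1 then 1 else 0) := by
  have h : (-1 : R) ≠ 1 := by
    rw [ne_eq, neg_eq_iff_add_eq_zero, one_add_one_eq_two]
    exact two_ne_zero
  rcases ha with rfl | rfl | rfl <;> simp [h, h.symm]

lemma sub_eq_pow_sub_of_parity_recurrence {R : Type*} [Ring R] {P Q : R} {B U : ℕ → R}
    (hB1 : B 1 = P) (hU1 : U 1 = Q)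
    (hB : ∀ l, 1 ≤ l → B (l + 1) = B l * P + U l * Q)
    (hU : ∀ l, 1 ≤ l → U (l + 1) = B l * Q + U l * P) :
    ∀ l, 1 ≤ l → B l - U l = (P - Q) ^ l := by
  intro l hl
  induction l, hl using Nat.le_induction with
  | base => rw [hB1, hU1, pow_one]
  | succ l hl ih =>
    calc B (l + 1) - U (l + 1) = (B l - U l) * (P - Q) := by
          rw [hB l hl, hU l hl]; noncomm_ring
      _ = (P - Q) ^ (l + 1) := by rw [ih, pow_succ]

theorem signed_katz_eq_unsigned_katz_general (N : ℕ) (A Ap An : Matrix (Fin N) (Fin N) ℝ)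
    (hA : ∀ i j, A i j = -1 ∨ A i j = 0 ∨ A i j = 1)
    (hAp : ∀ i j, Ap i j = if A i j = 1 then 1 else 0)
    (hAn : ∀ i j, An i j = if A i j = -1 then 1 else 0)
    (B U : ℕ → Matrix (Fin N) (Fin N) ℝ)
    (hB1 : B 1 = Ap) (hU1 : U 1 = An)
    (hB : ∀ l, 2 ≤ l → B l = B (l - 1) * Ap + U (l - 1) * An)
    (hU : ∀ l, 2 ≤ l → U l = B (l - 1) * An + U (l - 1) * Ap)
    (β : ℝ) (γ : ℕ) :
    ∑ l ∈ Finset.Icc 1 γ, β ^ l • (B l - U l) =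
      ∑ l ∈ Finset.Icc 1 γ, β ^ l • A ^ l := by
  have hA_eq : A = Ap - An := by
    ext i j
    rw [Matrix.sub_apply, hAp, hAn]
    exact eq_ite_one_sub_ite_neg_one (hA i j)
  have hBU : ∀ l, 1 ≤ l → B l - U l = A ^ l := by
    rw [hA_eq]
    exact sub_eq_pow_sub_of_parity_recurrence hB1 hU1
      (fun l hl ↦ hB (l + 1) (by omega)) (fun l hl ↦ hU (l + 1) (by omega))
  refine Finset.sum_congr rfl fun l hl ↦ ?_
  rw [hBU l (Finset.mem_Icc.mp hl).1]

/-- Signed Katz with `f(B_l, U_l) = B_l - U_l` equals unsigned Katz on the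
signed adjacency matrix `A`. -/
theorem signed_katz_eq_unsigned_katz (N : ℕ) (A Ap An : Matrix (Fin N) (Fin N) ℝ)
    (hA : ∀ i j, A i j = -1 ∨ A i j = 0 ∨ A i j = 1)
    (hAp : ∀ i j, Ap i j = if A i j = 1 then 1 else 0)
    (hAn : ∀ i j, An i j = if A i j = -1 then 1 else 0)
    (B U : ℕ → Matrix (Fin N) (Fin N) ℝ)
    (hB1 : B 1 = Ap) (hU1 : U 1 = An)
    (hB : ∀ l, 2 ≤ l → B l = B (l - 1) * Ap + U (l - 1) * An)
    (hU : ∀ l, 2 ≤ l → U l = B (l - 1) * An + U (l - 1) * Ap)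
    (β : ℝ) (γ : ℕ) (hγ : 0 < γ) :
    ∑ l ∈ Finset.Icc 1 γ, β ^ l • (B l - U l) =
      ∑ l ∈ Finset.Icc 1 γ, β ^ l • A ^ l :=
  signed_katz_eq_unsigned_katz_general N A Ap An hA hAp hAn B U hB1 hU1 hB hU β γ
end

section
/- Let A be a real N×N matrix with entries in {-1, 0, 1}, let A⁺ and A⁻ be as above with A = A⁺ - A⁻, and let |A| be the matrix with entries |A|_{ij} = |A_{ij}|. With B_1 = A⁺, U_1 = A⁻, B_l = B_{l-1}A⁺ + U_{l-1}A⁻, and U_l = B_{l-1}A⁻ + U_{l-1}A⁺ for l ≥ 2, every entry of B_l and of U_l is nonnegative, and for every l ≥ 1 one has B_l = (1/2)(|A|^l + A^l) and U_l = (1/2)(|A|^l - A^l) entrywise. -/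
/-- The even/odd negative-edge walk-count matrices are nonnegative and satisfy
`B l = (1/2)(|A|^l + A^l)` and `U l = (1/2)(|A|^l - A^l)`. -/
theorem signed_katz_closed_form (N : ℕ) (A Ap An Aabs : Matrix (Fin N) (Fin N) ℝ)
    (hA : ∀ i j, A i j = -1 ∨ A i j = 0 ∨ A i j = 1)
    (hAp : ∀ i j, Ap i j = if A i j = 1 then 1 else 0)
    (hAn : ∀ i j, An i j = if A i j = -1 then 1 else 0)
    (hAabs : ∀ i j, Aabs i j = |A i j|)
    (B U : ℕ → Matrix (Fin N) (Fin N) ℝ)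
    (hB1 : B 1 = Ap) (hU1 : U 1 = An)
    (hB : ∀ l, 2 ≤ l → B l = B (l - 1) * Ap + U (l - 1) * An)
    (hU : ∀ l, 2 ≤ l → U l = B (l - 1) * An + U (l - 1) * Ap) :
    ∀ l, 1 ≤ l →
      (∀ i j, 0 ≤ B l i j ∧ 0 ≤ U l i j) ∧
      B l = (1 / 2 : ℝ) • (Aabs ^ l + A ^ l) ∧
      U l = (1 / 2 : ℝ) • (Aabs ^ l - A ^ l) := by
  have hApnn : ∀ i j, 0 ≤ Ap i j := by
    intro i j; rw [hAp]; split <;> norm_num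
  have hAnnn : ∀ i j, 0 ≤ An i j := by
    intro i j; rw [hAn]; split <;> norm_num
  have hsumA : Ap + An = Aabs := by
    ext i j
    simp only [Matrix.add_apply, hAp, hAn, hAabs]
    rcases hA i j with h | h | h <;> rw [h] <;> norm_num
  have hdiffA : Ap - An = A := by
    ext i j
    simp only [Matrix.sub_apply, hAp, hAn]
    rcases hA i j with h | h | h <;> rw [h] <;> norm_num
  -- key induction
  have key : ∀ l, 1 ≤ l →
      (∀ i j, 0 ≤ B l i j ∧ 0 ≤ U l i j) ∧
      B l + U l = Aabs ^ l ∧ B l - U l = A ^ l := by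
    intro l hl
    induction l, hl using Nat.le_induction with
    | base =>
      refine ⟨fun i j => ⟨by rw [hB1]; exact hApnn i j, by rw [hU1]; exact hAnnn i j⟩, ?_, ?_⟩
      · rw [hB1, hU1, pow_one, hsumA]
      · rw [hB1, hU1, pow_one, hdiffA]
    | succ l hl ih =>
      obtain ⟨hnn, hsum, hdiff⟩ := ih
      have hBs : B (l + 1) = B l * Ap + U l * An := by
        have := hB (l + 1) (by omega); simpa using this
      have hUs : U (l + 1) = B l * An + U l * Ap := by
        have := hU (l + 1) (by omega); simpa using this
      refine ⟨?_, ?_, ?_⟩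
      · intro i j
        constructor
        · rw [hBs]
          simp only [Matrix.add_apply, Matrix.mul_apply]
          have h1 : (0:ℝ) ≤ ∑ k, B l i k * Ap k j :=
            Finset.sum_nonneg fun k _ => mul_nonneg (hnn i k).1 (hApnn k j)
          have h2 : (0:ℝ) ≤ ∑ k, U l i k * An k j :=
            Finset.sum_nonneg fun k _ => mul_nonneg (hnn i k).2 (hAnnn k j)
          linarith
        · rw [hUs]
          simp only [Matrix.add_apply, Matrix.mul_apply]
          have h1 : (0:ℝ) ≤ ∑ k, B l i k * An k j :=
            Finset.sum_nonneg fun k _ => mul_nonneg (hnn i k).1 (hAnnn k j)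
          have h2 : (0:ℝ) ≤ ∑ k, U l i k * Ap k j :=
            Finset.sum_nonneg fun k _ => mul_nonneg (hnn i k).2 (hApnn k j)
          linarith
      · rw [hBs, hUs, pow_succ, ← hsum, ← hsumA]
        noncomm_ring
      · rw [hBs, hUs, pow_succ, ← hdiff, ← hdiffA]
        noncomm_ring
  intro l hl
  obtain ⟨hnn, hsum, hdiff⟩ := key l hl
  refine ⟨hnn, ?_, ?_⟩
  · rw [← hsum, ← hdiff]; ext i j
    simp only [Matrix.smul_apply, Matrix.add_apply, Matrix.sub_apply, smul_eq_mul]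
    ring
  · rw [← hsum, ← hdiff]; ext i j
    simp only [Matrix.smul_apply, Matrix.add_apply, Matrix.sub_apply, smul_eq_mul]
    ring
end
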